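/- With L = min(N_e, N), the following lower bound on the multi-antenna-eavesdropper secrecy value holds: sup over Hermitian PSD matrices S with tr(S) ≤ P of [ min over i = 1,…,K of ( log det(I + H_sᴴ S H_s) − log det(I + H_iᴴ S H_i) ) ] is greater than or equal to sup over vectors Γ = (Γ_1,…,Γ_K) with Γ_i ≥ 0 of [ min over i = 1,…,K of log( g̃(Γ_1,…,Γ_K)/(1 + Γ_i/L)^L ) ]. -/

import Mathlib

open Matrix ComplexOrder

/-- The (real) value `det(I + Hᴴ S H)`. -/
noncomputable def detVal {N M : ℕ} (H : Matrix (Fin N) (Fin M) ℂ)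
    (S : Matrix (Fin N) (Fin N) ℂ) : ℝ :=
  ((1 + H.conjTranspose * S * H).det).re

/-- `g̃(Γ₁,…,Γ_K)`: the optimal value of the CR problem with trace-type IT constraints. -/
noncomputable def gTilde {N M K Ne : ℕ} (Hs : Matrix (Fin N) (Fin M) ℂ)
    (H : Fin K → Matrix (Fin N) (Fin Ne) ℂ) (P : ℝ) (Γ : Fin K → ℝ) : ℝ :=
  sSup {x : ℝ | ∃ S : Matrix (Fin N) (Fin N) ℂ, S.PosSemidef ∧ S.trace.re ≤ P ∧
    (∀ i, (((H i).conjTranspose * S * (H i)).trace).re ≤ Γ i) ∧ x = detVal Hs S}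

/-!
Let `L = min Ne N`. If `S` is feasible for `g̃(Γ)`, the matrix `H_iᴴ S H_i` has rank at most `L` and
trace at most `Γ_i`, so AM–GM on its eigenvalues gives `det (I + H_iᴴ S H_i) ≤ (1 + Γ_i / L) ^ L`.
Hence the secrecy objective at `S` is at least `log det (I + H_sᴴ S H_s) - log c`, where `c` is the
largest of the bounds `(1 + Γ_i / L) ^ L`; taking the supremum over feasible `S` turns the first
term into `log g̃(Γ)`.
-/

lemma Real.prod_le_arith_mean_pow {ι : Type*} [Fintype ι] {x : ι → ℝ} (hx : ∀ i, 0 ≤ x i) :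
    ∏ i, x i ≤ ((∑ i, x i) / Fintype.card ι) ^ Fintype.card ι := by
  rcases isEmpty_or_nonempty ι with hι | hι
  · simp
  have hcard : (0 : ℝ) < Fintype.card ι := by exact_mod_cast Fintype.card_pos
  have hprod : 0 ≤ ∏ i, x i := Finset.prod_nonneg fun i _ => hx i
  have amgm := Real.geom_mean_le_arith_mean Finset.univ (fun _ => 1) x (fun _ _ => zero_le_one)
    (by simpa using hcard) (fun i _ => hx i)
  simp only [Real.rpow_one, one_mul, Finset.sum_const, Finset.card_univ, nsmul_eq_mul,
    mul_one] at amgm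
  calc ∏ i, x i = ((∏ i, x i) ^ ((Fintype.card ι : ℝ)⁻¹)) ^ Fintype.card ι := by
        rw [← Real.rpow_natCast, ← Real.rpow_mul hprod, inv_mul_cancel₀ hcard.ne', Real.rpow_one]
    _ ≤ _ := by gcongr

namespace Matrix

variable {𝕜 n : Type*} [RCLike 𝕜] [Fintype n] [DecidableEq n] {A Q S : Matrix n n 𝕜}

lemma IsHermitian.det_one_add (hA : A.IsHermitian) :
    (1 + A).det = ((∏ i, (1 + hA.eigenvalues i) : ℝ) : 𝕜) := by
  have h : 1 + A = Unitary.conjStarAlgAut 𝕜 _ hA.eigenvectorUnitary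
      (1 + diagonal (RCLike.ofReal ∘ hA.eigenvalues)) := by
    rw [map_add, map_one, ← hA.spectral_theorem]
  rw [h, Unitary.conjStarAlgAut_apply, det_mul_comm, ← Matrix.mul_assoc,
    Unitary.coe_star_mul_self, Matrix.one_mul, ← diagonal_one, diagonal_add, det_diagonal]
  simp

lemma IsHermitian.re_trace (hA : A.IsHermitian) :
    RCLike.re A.trace = ∑ i, hA.eigenvalues i := by
  simp [hA.trace_eq_sum_eigenvalues]

namespace PosSemidef

lemma one_le_re_det_one_add (hA : A.PosSemidef) : 1 ≤ RCLike.re (1 + A).det := by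
  rw [hA.1.det_one_add, RCLike.ofReal_re]
  exact Finset.one_le_prod fun i _ => le_add_of_nonneg_right (hA.eigenvalues_nonneg i)

lemma re_det_one_add_le_pow (hA : A.PosSemidef) {t : ℝ} (ht : RCLike.re A.trace ≤ t) :
    RCLike.re (1 + A).det ≤ (1 + t / Fintype.card n) ^ Fintype.card n := by
  rw [hA.1.det_one_add, RCLike.ofReal_re]
  refine (Real.prod_le_arith_mean_pow fun i => ?_).trans ?_
  · linarith [hA.eigenvalues_nonneg i]
  rcases isEmpty_or_nonempty n with hn | hn
  · simp
  have hcard : (0 : ℝ) < Fintype.card n := by exact_mod_cast Fintype.card_pos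
  have htr : 0 ≤ RCLike.re A.trace := RCLike.nonneg_iff.mp hA.trace_nonneg |>.1
  rw [Finset.sum_add_distrib, Finset.sum_const, Finset.card_univ, nsmul_one, add_div,
    div_self hcard.ne', ← hA.1.re_trace]
  gcongr

lemma re_trace_mul_le (hQ : Q.PosSemidef) (hS : S.PosSemidef) :
    RCLike.re (Q * S).trace ≤ RCLike.re Q.trace * RCLike.re S.trace := by
  set U : Matrix n n 𝕜 := (hS.1.eigenvectorUnitary : Matrix n n 𝕜)
  have hR : (star U * Q * U).PosSemidef := by
    rw [star_eq_conjTranspose]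
    exact hQ.conjTranspose_mul_mul_same U
  have hRQ : (star U * Q * U).trace = Q.trace := by
    rw [trace_mul_cycle, Unitary.mul_star_self_of_mem hS.1.eigenvectorUnitary.2, Matrix.one_mul]
  have hQS : (Q * S).trace = ∑ i, (star U * Q * U) i i * hS.1.eigenvalues i := by
    conv_lhs => rw [hS.1.spectral_theorem, Unitary.conjStarAlgAut_apply]
    rw [← Matrix.mul_assoc, trace_mul_cycle, ← Matrix.mul_assoc]
    simp [U, trace, mul_diagonal]
  have hdiag (i : n) : RCLike.re ((star U * Q * U) i i) ≤ RCLike.re Q.trace := by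
    rw [← hRQ, trace, map_sum]
    exact Finset.single_le_sum (f := fun j => RCLike.re ((star U * Q * U) j j))
      (fun j _ => RCLike.nonneg_iff.mp hR.diag_nonneg |>.1) (Finset.mem_univ i)
  calc RCLike.re (Q * S).trace
        = ∑ i, RCLike.re ((star U * Q * U) i i) * hS.1.eigenvalues i := by simp [hQS, map_sum]
    _ ≤ ∑ i, RCLike.re Q.trace * hS.1.eigenvalues i :=
        Finset.sum_le_sum fun i _ => mul_le_mul_of_nonneg_right (hdiag i) (hS.eigenvalues_nonneg i)
    _ = RCLike.re Q.trace * RCLike.re S.trace := by rw [← Finset.mul_sum, hS.1.re_trace]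

end PosSemidef

end Matrix

section ChannelBounds

variable {N M Ne : ℕ}

@[simp]
lemma detVal_zero (H : Matrix (Fin N) (Fin M) ℂ) : detVal H 0 = 1 := by
  simp [detVal]

lemma one_le_detVal (H : Matrix (Fin N) (Fin M) ℂ) {S : Matrix (Fin N) (Fin N) ℂ}
    (hS : S.PosSemidef) : 1 ≤ detVal H S :=
  (hS.conjTranspose_mul_mul_same H).one_le_re_det_one_add

lemma detVal_le_of_trace_le (Hs : Matrix (Fin N) (Fin M) ℂ) {S : Matrix (Fin N) (Fin N) ℂ}
    (hS : S.PosSemidef) {P : ℝ} (hSP : S.trace.re ≤ P) :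
    detVal Hs S ≤ (1 + P * (Hs * Hsᴴ).trace.re / M) ^ M := by
  have hQ := posSemidef_self_mul_conjTranspose Hs
  have htr : (Hsᴴ * S * Hs).trace.re ≤ P * (Hs * Hsᴴ).trace.re := by
    rw [trace_mul_comm, ← Matrix.mul_assoc, mul_comm P]
    exact (hQ.re_trace_mul_le hS).trans
      (mul_le_mul_of_nonneg_left hSP (RCLike.nonneg_iff.mp hQ.trace_nonneg).1)
  simpa [detVal] using (hS.conjTranspose_mul_mul_same Hs).re_det_one_add_le_pow htr

open scoped MatrixOrder in
lemma detVal_le_pow_min (H : Matrix (Fin N) (Fin Ne) ℂ) {S : Matrix (Fin N) (Fin N) ℂ}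
    (hS : S.PosSemidef) {t : ℝ} (ht : (Hᴴ * S * H).trace.re ≤ t) :
    detVal H S ≤ (1 + t / (min Ne N : ℝ)) ^ (min Ne N) := by
  rcases le_total Ne N with h | h
  · rw [min_eq_left h, min_eq_left (Nat.cast_le.mpr h)]
    simpa [detVal] using (hS.conjTranspose_mul_mul_same H).re_det_one_add_le_pow ht
  · obtain ⟨B, rfl⟩ := CStarAlgebra.nonneg_iff_eq_star_mul_self.mp hS.nonneg
    have hBH : Hᴴ * (star B * B) * H = (B * H)ᴴ * (B * H) := by
      simp [star_eq_conjTranspose, conjTranspose_mul, Matrix.mul_assoc]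
    -- Sylvester: `det (1 + XY) = det (1 + YX)` turns the `Ne × Ne` determinant into an `N × N` one.
    rw [min_eq_right h, min_eq_right (Nat.cast_le.mpr h), detVal, hBH, det_one_add_mul_comm]
    simpa using (posSemidef_self_mul_conjTranspose (B * H)).re_det_one_add_le_pow
      (by rwa [trace_mul_comm, ← hBH])

end ChannelBounds

section SecrecyRate

variable {N M K Ne : ℕ} (Hs : Matrix (Fin N) (Fin M) ℂ) (H : Fin K → Matrix (Fin N) (Fin Ne) ℂ)
  {P : ℝ} {Γ : Fin K → ℝ}

lemma one_mem_gTilde_set (hP : 0 ≤ P) (hΓ : ∀ i, 0 ≤ Γ i) :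
    (1 : ℝ) ∈ {x : ℝ | ∃ S : Matrix (Fin N) (Fin N) ℂ, S.PosSemidef ∧ S.trace.re ≤ P ∧
      (∀ i, (((H i).conjTranspose * S * (H i)).trace).re ≤ Γ i) ∧ x = detVal Hs S} :=
  ⟨0, .zero, by simpa using hP, fun i => by simpa using hΓ i, (detVal_zero Hs).symm⟩

lemma one_le_gTilde (hP : 0 ≤ P) (hΓ : ∀ i, 0 ≤ Γ i) : 1 ≤ gTilde Hs H P Γ :=
  le_csSup ⟨_, by rintro _ ⟨S, hS, hSP, -, rfl⟩; exact detVal_le_of_trace_le Hs hS hSP⟩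
    (one_mem_gTilde_set Hs H hP hΓ)

lemma iInf_log_gTilde_div_le [Nonempty (Fin K)] (hP : 0 ≤ P) (hΓ : ∀ i, 0 ≤ Γ i) {r : ℝ}
    (hr : ∀ S : Matrix (Fin N) (Fin N) ℂ, S.PosSemidef → S.trace.re ≤ P →
      ⨅ i, (Real.log (detVal Hs S) - Real.log (detVal (H i) S)) ≤ r) :
    ⨅ i, Real.log (gTilde Hs H P Γ / (1 + Γ i / (min Ne N : ℝ)) ^ (min Ne N)) ≤ r := by
  set c : Fin K → ℝ := fun i => (1 + Γ i / (min Ne N : ℝ)) ^ (min Ne N)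
  have hc (i : Fin K) : 1 ≤ c i := one_le_pow₀ (le_add_of_nonneg_right
    (div_nonneg (hΓ i) (le_min (Nat.cast_nonneg _) (Nat.cast_nonneg _))))
  obtain ⟨j, hj⟩ := Finite.exists_max c
  have hcj : 0 < c j := zero_lt_one.trans_le (hc j)
  have hlog_le {x : ℝ} (hx : 0 < x) : Real.log (x / c j) ≤ r ↔ x ≤ c j * Real.exp r := by
    rw [Real.log_le_iff_le_exp (div_pos hx hcj), div_le_iff₀ hcj, mul_comm]
  have hfeasible : ∀ S : Matrix (Fin N) (Fin N) ℂ, S.PosSemidef → S.trace.re ≤ P →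
      (∀ i, ((H i)ᴴ * S * H i).trace.re ≤ Γ i) → detVal Hs S ≤ c j * Real.exp r := by
    intro S hS hSP hSΓ
    have hs := one_le_detVal Hs hS
    rw [← hlog_le (by linarith), Real.log_div (by linarith) hcj.ne']
    refine (le_ciInf fun i => ?_).trans (hr S hS hSP)
    have hi := one_le_detVal (H i) hS
    exact sub_le_sub_left
      (Real.log_le_log (by linarith) ((detVal_le_pow_min (H i) hS (hSΓ i)).trans (hj i))) _
  have hg1 := one_le_gTilde Hs H hP hΓ
  calc ⨅ i, Real.log (gTilde Hs H P Γ / c i) ≤ Real.log (gTilde Hs H P Γ / c j) :=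
        ciInf_le (Finite.bddBelow_range _) j
    _ ≤ r := (hlog_le (by linarith)).mpr <| csSup_le ⟨1, one_mem_gTilde_set Hs H hP hΓ⟩
        (by rintro _ ⟨S, hS, hSP, hSΓ, rfl⟩; exact hfeasible S hS hSP hSΓ)

end SecrecyRate

theorem stmt_8_general (N M K Ne : ℕ) [NeZero K]
    (P : ℝ) (hP : 0 < P)
    (Hs : Matrix (Fin N) (Fin M) ℂ) (H : Fin K → Matrix (Fin N) (Fin Ne) ℂ) :
    sSup {v : ℝ | ∃ Γ : Fin K → ℝ, (∀ i, 0 ≤ Γ i) ∧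
        v = ⨅ i : Fin K,
          Real.log (gTilde Hs H P Γ / (1 + Γ i / (min Ne N : ℝ)) ^ (min Ne N))} ≤
    sSup {v : ℝ | ∃ S : Matrix (Fin N) (Fin N) ℂ, S.PosSemidef ∧ S.trace.re ≤ P ∧
        v = ⨅ i : Fin K,
          (Real.log (detVal Hs S) - Real.log (detVal (H i) S))} := by
  set R := {v : ℝ | ∃ S : Matrix (Fin N) (Fin N) ℂ, S.PosSemidef ∧ S.trace.re ≤ P ∧
    v = ⨅ i : Fin K, (Real.log (detVal Hs S) - Real.log (detVal (H i) S))}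
  have hR : BddAbove R := by
    refine ⟨Real.log ((1 + P * (Hs * Hsᴴ).trace.re / M) ^ M), ?_⟩
    rintro _ ⟨S, hS, hSP, rfl⟩
    have hs := one_le_detVal Hs hS
    calc _ ≤ Real.log (detVal Hs S) - Real.log (detVal (H 0) S) :=
          ciInf_le (Finite.bddBelow_range _) (0 : Fin K)
      _ ≤ Real.log (detVal Hs S) := sub_le_self _ (Real.log_nonneg (one_le_detVal (H 0) hS))
      _ ≤ _ := Real.log_le_log (by linarith) (detVal_le_of_trace_le Hs hS hSP)
  have h0 : (0 : ℝ) ∈ R := ⟨0, .zero, by simpa using hP.le, by simp⟩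
  refine Real.sSup_le ?_ (le_csSup hR h0)
  rintro _ ⟨Γ, hΓ, rfl⟩
  exact iInf_log_gTilde_div_le Hs H hP.le hΓ fun S hS hSP => le_csSup hR ⟨S, hS, hSP, rfl⟩

theorem stmt_8 (N M K Ne : ℕ) [NeZero K] (hN : 0 < N) (hM : 0 < M) (hNe : 0 < Ne)
    (P : ℝ) (hP : 0 < P)
    (Hs : Matrix (Fin N) (Fin M) ℂ) (H : Fin K → Matrix (Fin N) (Fin Ne) ℂ) :
    sSup {v : ℝ | ∃ Γ : Fin K → ℝ, (∀ i, 0 ≤ Γ i) ∧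
        v = ⨅ i : Fin K,
          Real.log (gTilde Hs H P Γ / (1 + Γ i / (min Ne N : ℝ)) ^ (min Ne N))} ≤
    sSup {v : ℝ | ∃ S : Matrix (Fin N) (Fin N) ℂ, S.PosSemidef ∧ S.trace.re ≤ P ∧
        v = ⨅ i : Fin K,
          (Real.log (detVal Hs S) - Real.log (detVal (H i) S))} :=
  stmt_8_general N M K Ne P hP Hs H
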